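/- arXiv:2511.22119 — 2 statements merged into one kernel-verified Lean document; each statement's English description precedes it below -/
import Mathlib

section
/- Let r : ℕ → ℝ be a reward sequence with |r_t| ≤ M for all t, let 0 ≤ γ < 1, and let Φ : S → ℝ be bounded. Define the shaped reward r'_t = r_t + γ Φ(s_{t+1}) − Φ(s_t) along a state sequence s : ℕ → S. Then the shaped return G' = ∑_{k=0}^{∞} γ^k r'_k converges and equals G − Φ(s_0), where G = ∑_{k=0}^{∞} γ^k r_k. -/
theorem shaped_return_eq {S : Type*} (s : ℕ → S) (r : ℕ → ℝ) (M : ℝ)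
    (hr : ∀ t, |r t| ≤ M) (γ : ℝ) (hγ0 : 0 ≤ γ) (hγ1 : γ < 1)
    (Φ : S → ℝ) (C : ℝ) (hΦ : ∀ x, |Φ x| ≤ C) :
    Summable (fun k => γ ^ k * (r k + γ * Φ (s (k + 1)) - Φ (s k))) ∧
    ∑' k, γ ^ k * (r k + γ * Φ (s (k + 1)) - Φ (s k))
      = (∑' k, γ ^ k * r k) - Φ (s 0) := by
  have hgeo : Summable (fun k : ℕ => γ ^ k) := summable_geometric_of_lt_one hγ0 hγ1
  have hbd : ∀ (g : ℕ → ℝ) (B : ℝ), (∀ k, |g k| ≤ B) →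
      Summable (fun k => γ ^ k * g k) := by
    intro g B hg
    apply Summable.of_abs
    apply Summable.of_nonneg_of_le (fun k => abs_nonneg _) (fun k => ?_)
      (hgeo.mul_right B)
    rw [abs_mul, abs_pow, abs_of_nonneg hγ0]
    exact mul_le_mul_of_nonneg_left (hg k) (pow_nonneg hγ0 k)
  have hR : Summable (fun k => γ ^ k * r k) := hbd r M hr
  set f : ℕ → ℝ := fun k => γ ^ k * Φ (s k) with hf
  have hF : Summable f := hbd (fun k => Φ (s k)) C (fun k => hΦ _)
  have hF' : Summable (fun k => f (k + 1)) := by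
    exact (summable_nat_add_iff 1).mpr hF
  have htel : Summable (fun k => f (k + 1) - f k) := hF'.sub hF
  have htel_sum : HasSum (fun k => f (k + 1) - f k) (-f 0) := by
    rw [htel.hasSum_iff_tendsto_nat]
    have : ∀ n : ℕ, ∑ i ∈ Finset.range n, (f (i + 1) - f i) = f n - f 0 :=
      fun n => Finset.sum_range_sub f n
    simp only [this]
    have hlim : Filter.Tendsto f Filter.atTop (nhds 0) := by
      have : Filter.Tendsto (fun n : ℕ => γ ^ n) Filter.atTop (nhds 0) :=
        tendsto_pow_atTop_nhds_zero_of_lt_one hγ0 hγ1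
      rw [hf]
      have h0 : Filter.Tendsto (fun n : ℕ => γ ^ n * C) Filter.atTop (nhds 0) := by
        simpa using this.mul_const C
      have h0' : Filter.Tendsto (fun n : ℕ => -(γ ^ n * C)) Filter.atTop (nhds 0) := by
        simpa using h0.neg
      apply tendsto_of_tendsto_of_tendsto_of_le_of_le h0' h0
        (fun n => ?_) (fun n => ?_)
      · calc -(γ ^ n * C) ≤ -(γ ^ n * |Φ (s n)|) := by
              apply neg_le_neg
              exact mul_le_mul_of_nonneg_left (hΦ _) (pow_nonneg hγ0 n)
            _ ≤ γ ^ n * Φ (s n) := by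
              rw [neg_le]
              calc -(γ ^ n * Φ (s n)) = γ ^ n * (-Φ (s n)) := by ring
                _ ≤ γ ^ n * |Φ (s n)| :=
                  mul_le_mul_of_nonneg_left (neg_le_abs _) (pow_nonneg hγ0 n)
      · calc γ ^ n * Φ (s n) ≤ γ ^ n * |Φ (s n)| :=
              mul_le_mul_of_nonneg_left (le_abs_self _) (pow_nonneg hγ0 n)
          _ ≤ γ ^ n * C :=
              mul_le_mul_of_nonneg_left (hΦ _) (pow_nonneg hγ0 n)
    simpa using hlim.sub_const (f 0)
  have heq : (fun k => γ ^ k * (r k + γ * Φ (s (k + 1)) - Φ (s k)))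
      = fun k => γ ^ k * r k + (f (k + 1) - f k) := by
    funext k; rw [hf]; simp only; ring
  have hsum : HasSum (fun k => γ ^ k * (r k + γ * Φ (s (k + 1)) - Φ (s k)))
      ((∑' k, γ ^ k * r k) - Φ (s 0)) := by
    rw [heq]
    have := hR.hasSum.add htel_sum
    simpa [hf, sub_eq_add_neg] using this
  exact ⟨hsum.summable, hsum.tsum_eq⟩
end

section
/- Optimal-value shift under shaping in a finite MDP with deterministic transitions: define the optimal Bellman operator (T V)(s) = max_{a∈A} [r(s,a,Tr(s,a)) + γ V(Tr(s,a))] and the shaped operator (T' W)(s) = max_{a∈A} [r'(s,a,Tr(s,a)) + γ W(Tr(s,a))] with r'(s,a,s') = r(s,a,s') + γΦ(s') − Φ(s). Then T'(V − Φ) = T V − Φ for every V : S → ℝ; hence if V* is the fixed point of T, V* − Φ is a fixed point of T'. -/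
lemma ciSup_sub_const {A : Type*} [Fintype A] [Nonempty A] (f : A → ℝ) (c : ℝ) :
    (⨆ a : A, (f a - c)) = (⨆ a : A, f a) - c := by
  have h := (OrderIso.subRight c).map_ciSup (f := f)
    (Set.Finite.bddAbove (Set.finite_range f))
  simpa using h.symm

theorem optimal_bellman_shift {S A : Type*} [Fintype A] [Nonempty A]
    (Tr : S × A → S) (r : S × A × S → ℝ) (γ : ℝ) (Φ : S → ℝ) (V : S → ℝ) :
    (fun s => ⨆ a : A, ((r (s, a, Tr (s, a)) + γ * Φ (Tr (s, a)) - Φ s)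
        + γ * ((V - Φ) (Tr (s, a)))))
      = (fun s => ⨆ a : A, (r (s, a, Tr (s, a)) + γ * V (Tr (s, a)))) - Φ := by
  funext s
  simp only [Pi.sub_apply]
  have h : ∀ a : A, r (s, a, Tr (s, a)) + γ * Φ (Tr (s, a)) - Φ s
      + γ * (V (Tr (s, a)) - Φ (Tr (s, a)))
      = (r (s, a, Tr (s, a)) + γ * V (Tr (s, a))) - Φ s := fun a => by ring
  simp only [h]
  exact ciSup_sub_const (fun a : A => r (s, a, Tr (s, a)) + γ * V (Tr (s, a))) (Φ s)
end
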